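/- Under stability, a weak until is a strong until or a persistent property: let w be a word, φ, ψ pLTL formulae, and t a time such that (w,t) ⊨ G(φ W ψ) whenever (w,t) ⊨ F G(φ W ψ). Then (w, t) ⊨ φ W ψ if and only if (w, t) ⊨ φ U ψ or (w, t) ⊨ F G(φ W ψ). -/

import Mathlib

inductive PLTL (AP : Type) : Type
  | tt : PLTL AP
  | ff : PLTL AP
  | atom (p : AP) : PLTL AP
  | not (φ : PLTL AP) : PLTL AP
  | and (φ ψ : PLTL AP) : PLTL AP
  | or (φ ψ : PLTL AP) : PLTL AP
  | next (φ : PLTL AP) : PLTL AP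
  | untl (φ ψ : PLTL AP) : PLTL AP
  | yest (φ : PLTL AP) : PLTL AP
  | since (φ ψ : PLTL AP) : PLTL AP

def Word (AP : Type) := ℕ → Set AP

def Sat {AP : Type} (w : Word AP) : PLTL AP → ℕ → Prop
  | .tt, _ => True
  | .ff, _ => False
  | .atom p, t => p ∈ w t
  | .not φ, t => ¬ Sat w φ t
  | .and φ ψ, t => Sat w φ t ∧ Sat w ψ t
  | .or φ ψ, t => Sat w φ t ∨ Sat w ψ t
  | .next φ, t => Sat w φ (t + 1)
  | .untl φ ψ, t => ∃ r, t ≤ r ∧ Sat w ψ r ∧ ∀ s, t ≤ s → s < r → Sat w φ s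
  | .yest φ, t => 0 < t ∧ Sat w φ (t - 1)
  | .since φ ψ, t => ∃ r, r ≤ t ∧ Sat w ψ r ∧ ∀ s, r < s → s ≤ t → Sat w φ s

/-- Weak yesterday: `W̃Y φ := Y φ ∨ ¬ Y ⊤`. -/
def PLTL.wyest {AP : Type} (φ : PLTL AP) : PLTL AP :=
  .or (.yest φ) (.not (.yest .tt))

/-- Historically: `H φ := ¬(⊤ S ¬φ)`. -/
def PLTL.hist {AP : Type} (φ : PLTL AP) : PLTL AP :=
  .not (.since .tt (.not φ))

/-- Weak since: `φ S̃ ψ := (φ S ψ) ∨ H φ`. -/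
def PLTL.wsince {AP : Type} (φ ψ : PLTL AP) : PLTL AP :=
  .or (.since φ ψ) (.hist φ)

/-- Eventually: `F φ := ⊤ U φ`. -/
def PLTL.ev {AP : Type} (φ : PLTL AP) : PLTL AP := .untl .tt φ

/-- Always: `G φ := ¬ F ¬ φ`. -/
def PLTL.alw {AP : Type} (φ : PLTL AP) : PLTL AP := .not (.ev (.not φ))

/-- Weak until: `φ W ψ := (φ U ψ) ∨ G φ`. -/
def PLTL.wuntl {AP : Type} (φ ψ : PLTL AP) : PLTL AP :=
  .or (.untl φ ψ) (.alw φ)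

/-- The suffix `w₁` of a word: `w₁ t = w (t + 1)`. -/
def Word.suffix1 {AP : Type} (w : Word AP) : Word AP := fun t => w (t + 1)

/-! Every time point satisfying `G φ` satisfies `φ W ψ`, and `G` is inherited by later time points,
so `G φ` yields `G (φ W ψ)` and hence `F G (φ W ψ)`. Conversely, stability turns `F G (φ W ψ)`
into `G (φ W ψ)`, which gives `φ W ψ` now. -/

section Semantics

variable {AP : Type} {w : Word AP} {ξ : PLTL AP} {s : ℕ}

theorem sat_alw_iff : Sat w (PLTL.alw ξ) s ↔ ∀ r, s ≤ r → Sat w ξ r := by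
  simp [PLTL.alw, PLTL.ev, Sat]

theorem sat_ev_of_sat (h : Sat w ξ s) : Sat w (PLTL.ev ξ) s :=
  ⟨s, le_rfl, h, fun _ _ _ => trivial⟩

theorem sat_of_sat_alw (h : Sat w (PLTL.alw ξ) s) : Sat w ξ s :=
  sat_alw_iff.1 h s le_rfl

theorem sat_alw_of_le {r : ℕ} (h : Sat w (PLTL.alw ξ) s) (hsr : s ≤ r) :
    Sat w (PLTL.alw ξ) r :=
  sat_alw_iff.2 fun q hrq => sat_alw_iff.1 h q (hsr.trans hrq)

theorem sat_alw_wuntl_of_sat_alw {φ ψ : PLTL AP} (h : Sat w (PLTL.alw φ) s) :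
    Sat w (PLTL.alw (PLTL.wuntl φ ψ)) s :=
  sat_alw_iff.2 fun _ hsr => Or.inr (sat_alw_of_le h hsr)

end Semantics

theorem weak_until_iff_under_stability {AP : Type} (φ ψ : PLTL AP) (w : Word AP) (t : ℕ)
    (hstab : Sat w (PLTL.ev (PLTL.alw (PLTL.wuntl φ ψ))) t →
      Sat w (PLTL.alw (PLTL.wuntl φ ψ)) t) :
    Sat w (PLTL.wuntl φ ψ) t ↔
      Sat w (.untl φ ψ) t ∨ Sat w (PLTL.ev (PLTL.alw (PLTL.wuntl φ ψ))) t := by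
  constructor
  · rintro (hU | hG)
    · exact Or.inl hU
    · exact Or.inr (sat_ev_of_sat (sat_alw_wuntl_of_sat_alw hG))
  · rintro (hU | hFG)
    · exact Or.inl hU
    · exact sat_of_sat_alw (hstab hFG)
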